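/- arXiv:1205.0674 — 3 statements merged into one kernel-verified Lean document; each statement's English description precedes it below -/
import Mathlib

section
/- (Linear Deduction Theorem) For every theory T and formulas ϑ, φ, ψ, the following are equivalent: (1) T ∪ {0 ≤ ϑ} ⊢_lin φ ≤ ψ; (2) there exists a nonnegative rational r such that T ⊢_lin φ + rϑ ≤ ψ. -/
namespace RVL

/-- Formulas of ℝ-valued propositional logic (basic case) over proposition letters `L`. -/
inductive Fml (L : Type) : Type
  | var : L → Fml L
  | zero : Fml L
  | add : Fml L → Fml L → Fml L
  | min : Fml L → Fml L → Fml L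
  | smul : ℚ → Fml L → Fml L

namespace Fml

variable {L : Type}

/-- `-φ` abbreviates `(-1)φ`. -/
def neg (φ : Fml L) : Fml L := smul (-1) φ

/-- `φ - ψ` abbreviates `φ + (-ψ)`. -/
def sub (φ ψ : Fml L) : Fml L := add φ (neg ψ)

/-- `φ ∨ ψ` abbreviates `-((-φ) ∧ (-ψ))`. -/
def max (φ ψ : Fml L) : Fml L := neg (min (neg φ) (neg ψ))

/-- `φ⁺` abbreviates `0 ∨ φ`. -/
def pos (φ : Fml L) : Fml L := max zero φ

/-- `φ⁻` abbreviates `0 ∨ (-φ)`. -/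
def negPart (φ : Fml L) : Fml L := max zero (neg φ)

/-- `|φ|` abbreviates `φ ∨ (-φ)`. -/
def abs (φ : Fml L) : Fml L := max φ (neg φ)

end Fml

/-- The logical axioms, as a binary relation: `Ax φ ψ` means `φ ≤ ψ` is a logical axiom.
Equality axioms are rendered as the corresponding pair of inequality axioms. -/
inductive Ax {L : Type} : Fml L → Fml L → Prop
  | addComm (φ ψ : Fml L) : Ax (.add φ ψ) (.add ψ φ)
  | addAssoc (φ ψ ξ : Fml L) : Ax (.add (.add φ ψ) ξ) (.add ψ (.add φ ξ))
  | addAssoc' (φ ψ ξ : Fml L) : Ax (.add ψ (.add φ ξ)) (.add (.add φ ψ) ξ)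
  | addZero (φ : Fml L) : Ax (.add φ .zero) φ
  | addZero' (φ : Fml L) : Ax φ (.add φ .zero)
  | oneSmul (φ : Fml L) : Ax (.smul 1 φ) φ
  | oneSmul' (φ : Fml L) : Ax φ (.smul 1 φ)
  | zeroSmul (φ : Fml L) : Ax (.smul 0 φ) .zero
  | smulAddSmul (r s : ℚ) (φ : Fml L) : Ax (.add (.smul r φ) (.smul s φ)) (.smul (r + s) φ)
  | smulAddSmul' (r s : ℚ) (φ : Fml L) : Ax (.smul (r + s) φ) (.add (.smul r φ) (.smul s φ))
  | smulDist (r : ℚ) (φ ψ : Fml L) : Ax (.add (.smul r φ) (.smul r ψ)) (.smul r (.add φ ψ))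
  | smulDist' (r : ℚ) (φ ψ : Fml L) : Ax (.smul r (.add φ ψ)) (.add (.smul r φ) (.smul r ψ))
  | smulSmul (r s : ℚ) (φ : Fml L) : Ax (.smul r (.smul s φ)) (.smul (r * s) φ)
  | smulSmul' (r s : ℚ) (φ : Fml L) : Ax (.smul (r * s) φ) (.smul r (.smul s φ))
  | minIdem (φ : Fml L) : Ax (.min φ φ) φ
  | minIdem' (φ : Fml L) : Ax φ (.min φ φ)
  | minComm (φ ψ : Fml L) : Ax (.min φ ψ) (.min ψ φ)
  | minAssoc (φ ψ ξ : Fml L) : Ax (.min (.min φ ψ) ξ) (.min φ (.min ψ ξ))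
  | minAssoc' (φ ψ ξ : Fml L) : Ax (.min φ (.min ψ ξ)) (.min (.min φ ψ) ξ)
  | minAdd (φ ψ ξ : Fml L) : Ax (.min (.add φ ξ) (.add ψ ξ)) (.add (.min φ ψ) ξ)
  | minAdd' (φ ψ ξ : Fml L) : Ax (.add (.min φ ψ) ξ) (.min (.add φ ξ) (.add ψ ξ))
  | smulMin (r : ℚ) (hr : 0 ≤ r) (φ ψ : Fml L) :
      Ax (.smul r (.min φ ψ)) (.min (.smul r φ) (.smul r ψ))
  | smulMin' (r : ℚ) (hr : 0 ≤ r) (φ ψ : Fml L) :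
      Ax (.min (.smul r φ) (.smul r ψ)) (.smul r (.min φ ψ))
  | minLe (φ ψ : Fml L) : Ax (.min φ ψ) ψ

/-- A theory is a set of inequalities, i.e. of ordered pairs of formulas. -/
abbrev Theory (L : Type) := Set (Fml L × Fml L)

/-- `Der T φ ψ` : the inequality `φ ≤ ψ` is derivable from `T` together with the
logical axioms, using rules r1 (transitivity), r2 (positive linearity), r3 (restriction). -/
inductive Der {L : Type} (T : Theory L) : Fml L → Fml L → Prop
  | hyp {φ ψ : Fml L} : (φ, ψ) ∈ T → Der T φ ψ
  | ax {φ ψ : Fml L} : Ax φ ψ → Der T φ ψ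
  | trans {φ ξ ψ : Fml L} : Der T φ ξ → Der T ξ ψ → Der T φ ψ
  | lin {φ ψ : Fml L} (r : ℚ) (hr : 0 ≤ r) (ξ : Fml L) :
      Der T φ ψ → Der T (.add (.smul r φ) ξ) (.add (.smul r ψ) ξ)
  | restr {φ ψ : Fml L} : Der T φ ψ → Der T (.min φ .zero) (.min ψ .zero)

/-- `DerLin T φ ψ` : derivability using only rules r1 and r2 (written `⊢_lin`). -/
inductive DerLin {L : Type} (T : Theory L) : Fml L → Fml L → Prop
  | hyp {φ ψ : Fml L} : (φ, ψ) ∈ T → DerLin T φ ψ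
  | ax {φ ψ : Fml L} : Ax φ ψ → DerLin T φ ψ
  | trans {φ ξ ψ : Fml L} : DerLin T φ ξ → DerLin T ξ ψ → DerLin T φ ψ
  | lin {φ ψ : Fml L} (r : ℚ) (hr : 0 ≤ r) (ξ : Fml L) :
      DerLin T φ ψ → DerLin T (.add (.smul r φ) ξ) (.add (.smul r ψ) ξ)

/-- The value of a formula in a model `M : L → ℝ`. -/
noncomputable def val {L : Type} (M : L → ℝ) : Fml L → ℝ
  | .var P => M P
  | .zero => 0
  | .add φ ψ => val M φ + val M ψ
  | .min φ ψ => Min.min (val M φ) (val M ψ)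
  | .smul q φ => (q : ℝ) * val M φ

/-- `M ⊨ T`. -/
def Models {L : Type} (M : L → ℝ) (T : Theory L) : Prop :=
  ∀ p ∈ T, val M p.1 ≤ val M p.2

/-- `T ⊨ φ ≤ ψ`. -/
def Sem {L : Type} (T : Theory L) (φ ψ : Fml L) : Prop :=
  ∀ M : L → ℝ, Models M T → val M φ ≤ val M ψ

/-- A theory is consistent if some formula is not derivable from it. -/
def Consistent {L : Type} (T : Theory L) : Prop := ∃ φ : Fml L, ¬ Der T .zero φ

section Helpers

variable {L : Type} {T : Theory L}

lemma dl_refl (φ : Fml L) : DerLin T φ φ :=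
  .trans (.ax (.oneSmul' φ)) (.ax (.oneSmul φ))

lemma dl_B (α ξ : Fml L) :
    DerLin T (.add α ξ) (.add (.smul 1 α) (.smul 1 ξ)) :=
  .trans (.ax (.oneSmul' (.add α ξ))) (.ax (.smulDist' 1 α ξ))

lemma dl_B' (α ξ : Fml L) :
    DerLin T (.add (.smul 1 α) (.smul 1 ξ)) (.add α ξ) :=
  .trans (.ax (.smulDist 1 α ξ)) (.ax (.oneSmul (.add α ξ)))

lemma dl_addMonoL {α β : Fml L} (ξ : Fml L) (h : DerLin T α β) :
    DerLin T (.add α ξ) (.add β ξ) :=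
  (dl_B α ξ).trans (((DerLin.lin 1 (by norm_num) (.smul 1 ξ) h)).trans (dl_B' β ξ))

lemma dl_addMonoR {α β : Fml L} (ξ : Fml L) (h : DerLin T α β) :
    DerLin T (.add ξ α) (.add ξ β) :=
  (DerLin.ax (.addComm ξ α)).trans ((dl_addMonoL ξ h).trans (.ax (.addComm β ξ)))

lemma dl_smulMono {α β : Fml L} (r : ℚ) (hr : 0 ≤ r) (h : DerLin T α β) :
    DerLin T (.smul r α) (.smul r β) :=
  (DerLin.ax (.addZero' (.smul r α))).trans
    ((DerLin.lin r hr .zero h).trans (.ax (.addZero (.smul r β))))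

lemma dl_assoc1 (a b c : Fml L) :
    DerLin T (.add a (.add b c)) (.add (.add a b) c) :=
  (DerLin.ax (.addAssoc' b a c)).trans (dl_addMonoL c (.ax (.addComm b a)))

lemma dl_assoc2 (a b c : Fml L) :
    DerLin T (.add (.add a b) c) (.add a (.add b c)) :=
  (dl_addMonoL c (DerLin.ax (.addComm a b))).trans (.ax (.addAssoc b a c))

lemma dl_shuffle (a b c : Fml L) :
    DerLin T (.add (.add a b) c) (.add (.add a c) b) :=
  (dl_assoc2 a b c).trans ((dl_addMonoR a (.ax (.addComm b c))).trans (dl_assoc1 a c b))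

lemma dl_zsz : DerLin T (.zero : Fml L) (.smul 0 .zero) := by
  have h1 : DerLin T (.zero : Fml L) (.smul (0 + 1) .zero) := by
    norm_num; exact .ax (.oneSmul' .zero)
  refine h1.trans ((DerLin.ax (.smulAddSmul' 0 1 .zero)).trans ?_)
  exact (dl_addMonoR _ (.ax (.oneSmul .zero))).trans (.ax (.addZero _))

lemma dl_le_smul_zero (r : ℚ) (hr : 0 ≤ r) : DerLin T (.zero : Fml L) (.smul r .zero) := by
  have h1 : DerLin T (.smul (0:ℚ) (.zero : Fml L)) (.smul r (.smul 0 .zero)) := by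
    have := DerLin.ax (T := T) (.smulSmul' r 0 (.zero : Fml L))
    norm_num at this; exact this
  exact dl_zsz.trans (h1.trans (dl_smulMono r hr (.ax (.zeroSmul .zero))))

lemma dl_mono {T T' : Theory L} (hsub : T ⊆ T') {α β : Fml L} (h : DerLin T α β) :
    DerLin T' α β := by
  induction h with
  | hyp h => exact .hyp (hsub h)
  | ax h => exact .ax h
  | trans _ _ ih1 ih2 => exact ih1.trans ih2
  | lin r hr ξ _ ih => exact .lin r hr ξ ih

end Helpers

end RVL

open RVL in
/-- (Linear Deduction Theorem) `T ∪ {0 ≤ ϑ} ⊢_lin φ ≤ ψ` iff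
`T ⊢_lin φ + rϑ ≤ ψ` for some nonnegative rational `r`. -/
theorem linear_deduction (L : Type) (T : Theory L) (ϑ φ ψ : Fml L) :
    DerLin (insert (Fml.zero, ϑ) T) φ ψ ↔
      ∃ r : ℚ, 0 ≤ r ∧ DerLin T (Fml.add φ (Fml.smul r ϑ)) ψ := by
  constructor
  · intro h
    induction h with
    | @hyp α β h =>
      rcases h with h | h
      · obtain ⟨h1, h2⟩ := Prod.mk.injEq .. ▸ h
        subst h1; subst h2
        exact ⟨1, by norm_num,
          (DerLin.ax (.addComm _ _)).trans
            ((DerLin.ax (.addZero _)).trans (.ax (.oneSmul _)))⟩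
      · exact ⟨0, le_refl 0,
          (dl_addMonoR α (.ax (.zeroSmul ϑ))).trans
            ((DerLin.ax (.addZero α)).trans (.hyp h))⟩
    | @ax α β h =>
      exact ⟨0, le_refl 0,
        (dl_addMonoR α (.ax (.zeroSmul ϑ))).trans
          ((DerLin.ax (.addZero α)).trans (.ax h))⟩
    | @trans α ξ β _ _ ih1 ih2 =>
      obtain ⟨r, hr, h1⟩ := ih1
      obtain ⟨s, hs, h2⟩ := ih2
      refine ⟨r + s, by positivity, ?_⟩
      refine (dl_addMonoR α (DerLin.ax (.smulAddSmul' r s ϑ))).trans ?_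
      refine (dl_assoc1 α (.smul r ϑ) (.smul s ϑ)).trans ?_
      exact (dl_addMonoL _ h1).trans h2
    | @lin α β r hr ξ _ ih =>
      obtain ⟨s, hs, h1⟩ := ih
      refine ⟨r * s, by positivity, ?_⟩
      refine (dl_shuffle (.smul r α) ξ (.smul (r*s) ϑ)).trans (dl_addMonoL ξ ?_)
      refine (dl_addMonoR (.smul r α) (DerLin.ax (.smulSmul' r s ϑ))).trans ?_
      exact (DerLin.ax (.smulDist r α (.smul s ϑ))).trans (dl_smulMono r hr h1)
  · rintro ⟨r, hr, h⟩
    have h' : DerLin (insert (Fml.zero, ϑ) T) (Fml.add φ (Fml.smul r ϑ)) ψ :=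
      dl_mono (Set.subset_insert _ _) h
    have hz : DerLin (insert (Fml.zero, ϑ) T) (Fml.zero : Fml L) (.smul r ϑ) :=
      (dl_le_smul_zero r hr).trans
        (dl_smulMono r hr (.hyp (Set.mem_insert _ _)))
    exact (DerLin.ax (.addZero' φ)).trans ((dl_addMonoR φ hz).trans h')
end

section
/- (Affine Farkas' Lemma over ℚ) Let v₁,…,vₙ,u ∈ ℚᵏ and r₁,…,rₙ,s ∈ ℚ. Suppose the set S = {x ∈ ℚᵏ : 0 ≤ vᵢ·x + rᵢ for all i = 1,…,n} is non-empty. Then the following are equivalent: (1) 0 ≤ u·x + s for all x ∈ S; (2) there exist nonnegative rationals q₁,…,qₙ such that u = Σᵢ qᵢvᵢ and Σᵢ qᵢrᵢ ≤ s. -/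
/-!
The homogeneous Farkas lemma is proved by induction on the number of constraints, in the manner of
Fourier–Motzkin elimination: if `g` is not already a consequence of the constraints other than
`f a`, pick `x₀` satisfying them with `g x₀ < 0`, hence `f a x₀ < 0`; composing with the projection
onto `ker (f a)` along `x₀` gives a system with one constraint fewer, and the coefficient of `f a`
is read off at `x₀`.

The affine version reduces to it by homogenizing on `E × 𝕜` with the extra constraint `t ≥ 0`:
a feasible `(x, t)` with `t > 0` rescales to the point `t⁻¹ • x` of `S`, and one with `t = 0` is a
recession direction of the nonempty `S`, along which `g` cannot decrease. Over `ℚᵏ` the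
functionals are dot products.
-/

open Finset Function Module

lemma Finset.sum_insert_update_smul {ι R M : Type*} [SMul R M] [AddCommMonoid M] [DecidableEq ι]
    {a : ι} {s : Finset ι} (ha : a ∉ s) (q : ι → R) (c : R) (f : ι → M) :
    ∑ i ∈ insert a s, update q a c i • f i = c • f a + ∑ i ∈ s, q i • f i := by
  rw [sum_insert ha, update_self]
  congr 1
  exact sum_congr rfl fun i hi ↦ by rw [update_of_ne (ne_of_mem_of_not_mem hi ha)]

section Farkas

variable {𝕜 E ι : Type*} [Field 𝕜] [LinearOrder 𝕜] [IsStrictOrderedRing 𝕜]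
  [AddCommGroup E] [Module 𝕜 E]

lemma Module.Dual.eq_zero_of_forall_nonneg {g : Dual 𝕜 E} (hg : ∀ x, 0 ≤ g x) : g = 0 :=
  LinearMap.ext fun x ↦ le_antisymm (by simpa using hg (-x)) (hg x)

lemma Module.Dual.apply_sub_div_smul (φ ψ : Dual 𝕜 E) (x₀ x : E) :
    φ (x - (ψ x / ψ x₀) • x₀) = (φ - (φ x₀ / ψ x₀) • ψ) x := by
  simp only [map_sub, map_smul, smul_eq_mul, LinearMap.sub_apply, LinearMap.smul_apply]
  ring

lemma Module.Dual.apply_sub_div_smul_self (ψ : Dual 𝕜 E) {x₀ : E} (hx₀ : ψ x₀ ≠ 0) (x : E) :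
    ψ (x - (ψ x / ψ x₀) • x₀) = 0 := by
  rw [apply_sub_div_smul, div_self hx₀, one_smul, sub_self, LinearMap.zero_apply]

theorem Module.Dual.exists_nonneg_eq_sum_smul_of_forall_nonneg (s : Finset ι)
    (f : ι → Dual 𝕜 E) (g : Dual 𝕜 E) (h : ∀ x, (∀ i ∈ s, 0 ≤ f i x) → 0 ≤ g x) :
    ∃ q : ι → 𝕜, (∀ i, 0 ≤ q i) ∧ g = ∑ i ∈ s, q i • f i := by
  classical
  induction s using Finset.induction_on generalizing f g with
  | empty =>
    exact ⟨0, fun _ ↦ le_rfl, by simpa using eq_zero_of_forall_nonneg fun x ↦ h x (by simp)⟩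
  | insert a s ha ih =>
    by_cases hs : ∀ x, (∀ i ∈ s, 0 ≤ f i x) → 0 ≤ g x
    · obtain ⟨q, hq, rfl⟩ := ih f g hs
      refine ⟨update q a 0, fun i ↦ ?_, by rw [sum_insert_update_smul ha, zero_smul, zero_add]⟩
      rcases eq_or_ne i a with rfl | hi <;> simp [*]
    push Not at hs
    obtain ⟨x₀, hx₀s, hgx₀⟩ := hs
    have hfx₀ : f a x₀ < 0 := by
      by_contra! hfx₀
      exact hgx₀.not_ge (h x₀ (forall_mem_insert _ _ _ |>.2 ⟨hfx₀, hx₀s⟩))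
    obtain ⟨q, hq, hg⟩ := ih (fun i ↦ f i - (f i x₀ / f a x₀) • f a) (g - (g x₀ / f a x₀) • f a)
      fun x hx ↦ by
        rw [← apply_sub_div_smul]
        refine h _ (forall_mem_insert _ _ _ |>.2 ⟨?_, fun i hi ↦ ?_⟩)
        · rw [apply_sub_div_smul_self _ hfx₀.ne]
        · rw [apply_sub_div_smul]; exact hx i hi
    set c := (g x₀ - ∑ i ∈ s, q i * f i x₀) / f a x₀
    have hc : 0 ≤ c := div_nonneg_of_nonpos
      (sub_nonpos.2 <| hgx₀.le.trans <| sum_nonneg fun i hi ↦ mul_nonneg (hq i) (hx₀s i hi))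
      hfx₀.le
    refine ⟨update q a c, fun i ↦ ?_, ?_⟩
    · rcases eq_or_ne i a with rfl | hi <;> simp [*]
    rw [sum_insert_update_smul ha, eq_add_of_sub_eq hg]
    simp only [smul_sub, sum_sub_distrib, smul_smul, ← sum_smul, c, sub_div, sum_div, mul_div_assoc]
    module

variable {f : ι → Dual 𝕜 E} {r : ι → 𝕜} {g : Dual 𝕜 E} {s : 𝕜}

lemma Module.Dual.apply_nonneg_of_forall_apply_nonneg {x₀ : E} (hx₀ : ∀ i, 0 ≤ f i x₀ + r i)
    (h : ∀ x, (∀ i, 0 ≤ f i x + r i) → 0 ≤ g x + s) {x : E} (hx : ∀ i, 0 ≤ f i x) : 0 ≤ g x := by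
  by_contra! hgx
  have hgx₀ := h x₀ hx₀
  set t := (g x₀ + s + 1) / -g x
  have ht : 0 ≤ t := div_nonneg (by linarith) (by linarith)
  have hray := h (x₀ + t • x) fun i ↦ by
    simpa [add_right_comm] using add_nonneg (hx₀ i) (mul_nonneg ht (hx i))
  have hgt : t * g x = -(g x₀ + s + 1) := by
    rw [div_mul_eq_mul_div, div_neg, mul_div_cancel_right₀ _ hgx.ne]
  simp only [map_add, map_smul, smul_eq_mul, hgt] at hray
  linarith

lemma Module.Dual.add_mul_nonneg_of_forall_add_mul_nonneg {x₀ : E} (hx₀ : ∀ i, 0 ≤ f i x₀ + r i)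
    (h : ∀ x, (∀ i, 0 ≤ f i x + r i) → 0 ≤ g x + s) {x : E} {t : 𝕜} (ht : 0 ≤ t)
    (hx : ∀ i, 0 ≤ f i x + r i * t) : 0 ≤ g x + s * t := by
  rcases ht.eq_or_lt with rfl | ht
  · simpa using apply_nonneg_of_forall_apply_nonneg hx₀ h (by simpa using hx)
  have key : ∀ φ : Dual 𝕜 E, ∀ c, φ x + c * t = t * (φ (t⁻¹ • x) + c) := fun φ c ↦ by
    rw [map_smul, smul_eq_mul, mul_add, mul_inv_cancel_left₀ ht.ne', mul_comm]
  rw [key]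
  exact mul_nonneg ht.le <| h _ fun i ↦ nonneg_of_mul_nonneg_right (key (f i) (r i) ▸ hx i) ht

theorem Module.Dual.forall_nonneg_add_imp_iff [Fintype ι] {x₀ : E} (hx₀ : ∀ i, 0 ≤ f i x₀ + r i) :
    (∀ x, (∀ i, 0 ≤ f i x + r i) → 0 ≤ g x + s) ↔
      ∃ q : ι → 𝕜, (∀ i, 0 ≤ q i) ∧ g = ∑ i, q i • f i ∧ ∑ i, q i * r i ≤ s := by
  constructor
  · intro h
    -- `some i` indexes `(x, t) ↦ f i x + r i * t` and `none` the constraint `t ≥ 0`.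
    obtain ⟨Q, hQ, hG⟩ := exists_nonneg_eq_sum_smul_of_forall_nonneg univ
      (fun o : Option ι ↦ o.elim (LinearMap.snd 𝕜 E 𝕜) fun i ↦ (f i).coprod (r i • LinearMap.id))
      (g.coprod (s • LinearMap.id)) fun y hy ↦ by
        simpa [mul_comm] using
          add_mul_nonneg_of_forall_add_mul_nonneg hx₀ h (by simpa using hy none)
            fun i ↦ by simpa [mul_comm] using hy (some i)
    have hG_apply (y : E × 𝕜) := congr($hG y)
    refine ⟨fun i ↦ Q (some i), fun i ↦ hQ _, LinearMap.ext fun x ↦ ?_, ?_⟩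
    · simpa [Fintype.sum_option] using hG_apply (x, 0)
    · have hs : s = Q none + ∑ i, Q (some i) * r i := by
        simpa [Fintype.sum_option] using hG_apply (0, 1)
      linarith [hQ none]
  · rintro ⟨q, hq, rfl, hqs⟩ x hx
    calc 0 ≤ ∑ i, q i * (f i x + r i) := sum_nonneg fun i _ ↦ mul_nonneg (hq i) (hx i)
      _ ≤ (∑ i, q i • f i) x + s := by simpa [mul_add, sum_add_distrib] using hqs

end Farkas

/-- (Affine Farkas' Lemma over ℚ) Let `v₁,…,vₙ, u ∈ ℚᵏ` and `r₁,…,rₙ, s ∈ ℚ`, and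
suppose `S = {x ∈ ℚᵏ : 0 ≤ vᵢ·x + rᵢ for all i}` is non-empty.  Then `0 ≤ u·x + s`
for all `x ∈ S` iff there are nonnegative rationals `q₁,…,qₙ` with `u = Σᵢ qᵢvᵢ`
and `Σᵢ qᵢrᵢ ≤ s`. -/
theorem affine_farkas (k n : ℕ) (v : Fin n → Fin k → ℚ) (u : Fin k → ℚ)
    (r : Fin n → ℚ) (s : ℚ)
    (hS : ∃ x : Fin k → ℚ, ∀ i : Fin n, 0 ≤ (∑ j : Fin k, v i j * x j) + r i) :
    (∀ x : Fin k → ℚ, (∀ i : Fin n, 0 ≤ (∑ j : Fin k, v i j * x j) + r i) →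
        0 ≤ (∑ j : Fin k, u j * x j) + s) ↔
      ∃ q : Fin n → ℚ, (∀ i : Fin n, 0 ≤ q i) ∧
        u = ∑ i : Fin n, q i • v i ∧ (∑ i : Fin n, q i * r i) ≤ s := by
  let D := dotProductEquiv ℚ (Fin k)
  obtain ⟨x₀, hx₀⟩ := hS
  simpa only [← map_smul, ← map_sum, D.injective.eq_iff, D, dotProductEquiv_apply_apply,
    dotProduct] using Module.Dual.forall_nonneg_add_imp_iff (f := fun i ↦ D (v i)) (g := D u)
      (s := s) hx₀
end

section
/- Let v₁,…,vₙ ∈ ℚᵏ and r₁,…,rₙ ∈ ℚ, and let S = {x ∈ ℚᵏ : 0 ≤ vᵢ·x + rᵢ for all i = 1,…,n}. If S is empty, then there exist nonnegative rationals q₁,…,qₙ such that Σᵢ qᵢvᵢ = 0 and Σᵢ qᵢrᵢ < 0. -/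
/-!
Fourier–Motzkin elimination, by induction on the number of variables. To eliminate the last
variable, whose coefficients form the column `a`, keep the inequalities with `aᵢ = 0` and add,
for every pair with `aₚ > 0 > aₘ`, the combination `aₚ⁻¹ · (row p) - aₘ⁻¹ · (row m)`; these
nonnegative combinations cancel `a`. A solution `y` of the new system extends to the old one:
writing `cᵢ` for the value of row `i` at `y` without its last term, it says exactly that every
lower bound `-cₚ / aₚ` on the last variable lies below every upper bound `-cₘ / aₘ`. Hence the new
system is infeasible too, and a certificate `q'` for it pulls back along the nonnegative weight
matrix `W` to the certificate `q' ᵥ* W`. With no variables left, infeasibility means that some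
constant term is negative, and the corresponding unit vector is a certificate.
-/

open Finset Matrix

lemma Finite.exists_between_of_forall_le {α β L : Type*} [LinearOrder L] [Nonempty L]
    [Finite α] [Finite β] {f : α → L} {g : β → L} (h : ∀ a b, f a ≤ g b) :
    ∃ t, (∀ a, f a ≤ t) ∧ ∀ b, t ≤ g b := by
  rcases isEmpty_or_nonempty α with hα | hα
  · rcases isEmpty_or_nonempty β with hβ | hβ
    · exact ⟨Classical.arbitrary L, isEmptyElim, isEmptyElim⟩
    · obtain ⟨b₀, hb₀⟩ := Finite.exists_min g
      exact ⟨g b₀, isEmptyElim, hb₀⟩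
  · obtain ⟨a₀, ha₀⟩ := Finite.exists_max f
    exact ⟨f a₀, ha₀, h a₀⟩

namespace Matrix

lemma dotProduct_snoc {R : Type*} [Mul R] [AddCommMonoid R] {k : ℕ}
    (v : Fin (k + 1) → R) (y : Fin k → R) (t : R) :
    v ⬝ᵥ Fin.snoc y t = Fin.init v ⬝ᵥ y + v (Fin.last k) * t := by
  simp [dotProduct, Fin.sum_univ_castSucc, Fin.init]

lemma vecMul_eq_zero_of_castSucc_of_last {R ι : Type*} [NonUnitalNonAssocSemiring R] [Fintype ι]
    {k : ℕ} {A : Matrix ι (Fin (k + 1)) R} {q : ι → R}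
    (hinit : q ᵥ* A.submatrix id Fin.castSucc = 0) (hlast : q ⬝ᵥ Aᵀ (Fin.last k) = 0) :
    q ᵥ* A = 0 := by
  ext j
  induction j using Fin.lastCases with
  | last => exact hlast
  | cast j => exact congrFun hinit j

end Matrix

namespace FourierMotzkin

variable {K ι : Type*} [Field K] [LinearOrder K] [DecidableEq ι] (a : ι → K)

abbrev Index : Type _ := {i // a i = 0} ⊕ {i // 0 < a i} × {i // a i < 0}

def weight : Matrix (Index a) ι K
  | .inl z => Pi.single z.1 1
  | .inr (p, m) => Pi.single p.1 (a p)⁻¹ + Pi.single m.1 (-(a m)⁻¹)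

variable {a}

lemma weight_nonneg [IsStrictOrderedRing K] (i' : Index a) (i : ι) : 0 ≤ weight a i' i := by
  rcases i' with z | ⟨p, m⟩
  · exact (Pi.single_nonneg.2 zero_le_one : (0 : ι → K) ≤ _) i
  · exact add_nonneg ((Pi.single_nonneg.2 (inv_nonneg.2 p.2.le) : (0 : ι → K) ≤ _) i)
      ((Pi.single_nonneg.2 (neg_nonneg.2 (inv_nonpos.2 m.2.le)) : (0 : ι → K) ≤ _) i)

lemma weight_inl_dotProduct [Fintype ι] (z : {i // a i = 0}) (c : ι → K) :
    weight a (.inl z) ⬝ᵥ c = c z :=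
  single_one_dotProduct _ _

lemma weight_inr_dotProduct [Fintype ι] (p : {i // 0 < a i}) (m : {i // a i < 0}) (c : ι → K) :
    weight a (.inr (p, m)) ⬝ᵥ c = c p / a p - c m / a m := by
  simp only [weight, add_dotProduct, single_dotProduct]
  ring

lemma weight_mulVec_self [Fintype ι] : weight a *ᵥ a = 0 := by
  ext (z | ⟨p, m⟩)
  · exact (weight_inl_dotProduct z a).trans z.2
  · rw [mulVec, weight_inr_dotProduct, div_self p.2.ne', div_self m.2.ne, sub_self, Pi.zero_apply]

theorem exists_forall_nonneg_mul_add [IsStrictOrderedRing K] [Fintype ι] {c : ι → K}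
    (hc : 0 ≤ weight a *ᵥ c) :
    ∃ t, ∀ i, 0 ≤ a i * t + c i := by
  obtain ⟨t, hlow, hup⟩ := Finite.exists_between_of_forall_le
    (f := fun p : {i // 0 < a i} => -c p / a p) (g := fun m : {i // a i < 0} => -c m / a m)
    fun p m => by
      have : 0 ≤ weight a (.inr (p, m)) ⬝ᵥ c := hc _
      rw [weight_inr_dotProduct] at this
      rw [neg_div, neg_div]
      linarith
  refine ⟨t, fun i => ?_⟩
  rcases lt_trichotomy (a i) 0 with hneg | hzero | hpos
  · have := (le_div_iff_of_neg hneg).1 (hup ⟨i, hneg⟩)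
    linarith
  · have : 0 ≤ weight a (.inl ⟨i, hzero⟩) ⬝ᵥ c := hc _
    simpa [hzero, weight_inl_dotProduct] using this
  · have := (div_le_iff₀ hpos).1 (hlow ⟨i, hpos⟩)
    linarith

lemma exists_snoc_of_eliminated [IsStrictOrderedRing K] [Fintype ι] {k : ℕ}
    {A : Matrix ι (Fin (k + 1)) K} {b : ι → K} {y : Fin k → K}
    (hy : 0 ≤ (weight (Aᵀ (Fin.last k)) * A.submatrix id Fin.castSucc) *ᵥ y +
      weight (Aᵀ (Fin.last k)) *ᵥ b) :
    ∃ t, 0 ≤ A *ᵥ Fin.snoc y t + b := by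
  rw [← mulVec_mulVec, ← mulVec_add] at hy
  obtain ⟨t, ht⟩ := exists_forall_nonneg_mul_add hy
  refine ⟨t, fun i => ?_⟩
  have hti : 0 ≤ A i (Fin.last k) * t + (Fin.init (A i) ⬝ᵥ y + b i) := ht i
  show 0 ≤ A i ⬝ᵥ Fin.snoc y t + b i
  rw [dotProduct_snoc]
  linarith

end FourierMotzkin

namespace Matrix

def IsInfeasibilityCertificate {R ι n : Type*} [NonUnitalNonAssocSemiring R] [Preorder R]
    [Fintype ι] (A : Matrix ι n R) (b q : ι → R) : Prop :=
  0 ≤ q ∧ q ᵥ* A = 0 ∧ q ⬝ᵥ b < 0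

variable {K ι : Type*} [Field K] [LinearOrder K] [IsStrictOrderedRing K] [Fintype ι]

open FourierMotzkin in
lemma IsInfeasibilityCertificate.vecMul_weight [DecidableEq ι] {k : ℕ}
    {A : Matrix ι (Fin (k + 1)) K} {b : ι → K} {q : Index (Aᵀ (Fin.last k)) → K}
    (hq : IsInfeasibilityCertificate (weight (Aᵀ (Fin.last k)) * A.submatrix id Fin.castSucc)
      (weight (Aᵀ (Fin.last k)) *ᵥ b) q) :
    IsInfeasibilityCertificate A b (q ᵥ* weight (Aᵀ (Fin.last k))) := by
  obtain ⟨hq_nonneg, hq_vecMul, hq_dot⟩ := hq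
  refine ⟨fun i => sum_nonneg fun i' _ => mul_nonneg (hq_nonneg i') (weight_nonneg i' i),
    vecMul_eq_zero_of_castSucc_of_last ?_ ?_, ?_⟩
  · rw [vecMul_vecMul, hq_vecMul]
  · rw [← dotProduct_mulVec, weight_mulVec_self, dotProduct_zero]
  · rwa [← dotProduct_mulVec]

open FourierMotzkin in
theorem exists_isInfeasibilityCertificate {k : ℕ} (A : Matrix ι (Fin k) K) (b : ι → K)
    (h : ¬ ∃ x, 0 ≤ A *ᵥ x + b) : ∃ q, IsInfeasibilityCertificate A b q := by
  classical
  induction k generalizing ι with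
  | zero =>
    obtain ⟨i, hi⟩ : ∃ i, b i < 0 := by simpa [Pi.le_def] using h
    exact ⟨Pi.single i 1, Pi.single_nonneg.2 zero_le_one, Subsingleton.elim _ _,
      by rwa [single_one_dotProduct]⟩
  | succ k ih =>
    have h_elim : ¬ ∃ y, 0 ≤ (weight (Aᵀ (Fin.last k)) * A.submatrix id Fin.castSucc) *ᵥ y +
        weight (Aᵀ (Fin.last k)) *ᵥ b := by
      rintro ⟨y, hy⟩
      obtain ⟨t, ht⟩ := exists_snoc_of_eliminated hy
      exact h ⟨Fin.snoc y t, ht⟩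
    obtain ⟨q, hq⟩ := ih _ _ h_elim
    exact ⟨_, hq.vecMul_weight⟩

end Matrix

/-- If `S = {x ∈ ℚᵏ : 0 ≤ vᵢ·x + rᵢ for all i}` is empty, then there are nonnegative
rationals `q₁,…,qₙ` with `Σᵢ qᵢvᵢ = 0` and `Σᵢ qᵢrᵢ < 0`. -/
theorem farkas_infeasible (k n : ℕ) (v : Fin n → Fin k → ℚ) (r : Fin n → ℚ)
    (hS : ¬ ∃ x : Fin k → ℚ, ∀ i : Fin n, 0 ≤ (∑ j : Fin k, v i j * x j) + r i) :
    ∃ q : Fin n → ℚ, (∀ i : Fin n, 0 ≤ q i) ∧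
      (∑ i : Fin n, q i • v i) = 0 ∧ (∑ i : Fin n, q i * r i) < 0 := by
  obtain ⟨q, hq_nonneg, hq_vecMul, hq_dot⟩ := Matrix.exists_isInfeasibilityCertificate v r hS
  exact ⟨q, hq_nonneg, Matrix.vecMul_eq_sum q v ▸ hq_vecMul, hq_dot⟩
end
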